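/- arXiv:1906.02238 — 2 statements merged into one kernel-verified Lean document; each statement's English description precedes it below -/
import Mathlib

section
/- Let D_S (source) and D_T (target) be distributions on X with labeling functions f_S, f_T : X → {0,1}. For any hypotheses h_1, h_2 in a class H: ε_T(h_1) ≤ ε_T(h_2) + ε_S(h_1,h_2) + (1/2) d_{H∆H}(D_S, D_T), where ε_T(h) = P_{D_T}(h ≠ f_T) and ε_S(h_1,h_2) = P_{D_S}(h_1 ≠ h_2). -/
/-! Under `D_T`, the event `h₁ ≠ f_T` lies in `{h₂ ≠ f_T} ∪ {h₁ ≠ h₂}`; and since `(h₁, h₂)` is one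
of the pairs in the supremum defining `dHH`, passing from `D_T` to `D_S` in the probability of
`{h₁ ≠ h₂}` costs at most half the divergence. -/

open MeasureTheory

/-- Probability that two hypotheses disagree under `D`. -/
noncomputable def errP {X : Type*} [MeasurableSpace X] (D : Measure X)
    (h h' : X → Bool) : ℝ :=
  (D {x | h x ≠ h' x}).toReal

/-- Error of hypothesis `h` against labeling function `f` under `D`. -/
noncomputable def errL {X : Type*} [MeasurableSpace X] (D : Measure X)
    (f h : X → Bool) : ℝ :=
  (D {x | h x ≠ f x}).toReal

/-- The `H∆H`-divergence between two measures. -/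
noncomputable def dHH {X : Type*} [MeasurableSpace X] (H : Set (X → Bool))
    (D₁ D₂ : Measure X) : ℝ :=
  2 * sSup ((fun p : (X → Bool) × (X → Bool) =>
      |errP D₁ p.1 p.2 - errP D₂ p.1 p.2|) '' (H ×ˢ H))

section

variable {X : Type*} [MeasurableSpace X]

theorem errL_le_errL_add_errP (D : Measure X) [IsFiniteMeasure D] (f h₁ h₂ : X → Bool) :
    errL D f h₁ ≤ errL D f h₂ + errP D h₁ h₂ := by
  have hsub : {x | h₁ x ≠ f x} ⊆ {x | h₂ x ≠ f x} ∪ {x | h₁ x ≠ h₂ x} := by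
    intro x hx
    by_cases h : h₁ x = h₂ x
    · exact Or.inl (show h₂ x ≠ f x from h ▸ hx)
    · exact Or.inr h
  exact (measureReal_mono hsub).trans (measureReal_union_le _ _)

theorem bddAbove_abs_errP_sub (H : Set (X → Bool)) (D₁ D₂ : Measure X)
    [IsZeroOrProbabilityMeasure D₁] [IsZeroOrProbabilityMeasure D₂] :
    BddAbove ((fun p : (X → Bool) × (X → Bool) =>
      |errP D₁ p.1 p.2 - errP D₂ p.1 p.2|) '' (H ×ˢ H)) := by
  refine ⟨1, ?_⟩
  rintro _ ⟨p, -, rfl⟩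
  have h₁ : errP D₁ p.1 p.2 ≤ 1 := measureReal_le_one
  have h₂ : errP D₂ p.1 p.2 ≤ 1 := measureReal_le_one
  have h₁' : 0 ≤ errP D₁ p.1 p.2 := measureReal_nonneg
  have h₂' : 0 ≤ errP D₂ p.1 p.2 := measureReal_nonneg
  exact abs_le.mpr ⟨by linarith, by linarith⟩

theorem abs_errP_sub_le_half_dHH {H : Set (X → Bool)} (D₁ D₂ : Measure X)
    [IsZeroOrProbabilityMeasure D₁] [IsZeroOrProbabilityMeasure D₂]
    {h₁ h₂ : X → Bool} (hh₁ : h₁ ∈ H) (hh₂ : h₂ ∈ H) :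
    |errP D₁ h₁ h₂ - errP D₂ h₁ h₂| ≤ (1/2) * dHH H D₁ D₂ := by
  have hle := le_csSup (bddAbove_abs_errP_sub H D₁ D₂) ⟨(h₁, h₂), ⟨hh₁, hh₂⟩, rfl⟩
  rw [dHH]
  linarith

end

theorem target_err_bound_general {X : Type*} [MeasurableSpace X] (D_S D_T : Measure X)
    [IsProbabilityMeasure D_S] [IsProbabilityMeasure D_T]
    (f_T : X → Bool)
    (H : Set (X → Bool))
    (h₁ h₂ : X → Bool) (hh₁ : h₁ ∈ H) (hh₂ : h₂ ∈ H) :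
    errL D_T f_T h₁ ≤ errL D_T f_T h₂ + errP D_S h₁ h₂
      + (1/2) * dHH H D_S D_T := by
  have hshift := abs_sub_le_iff.mp (abs_errP_sub_le_half_dHH D_S D_T hh₁ hh₂)
  linarith [errL_le_errL_add_errP D_T f_T h₁ h₂, hshift.2]

theorem target_err_bound {X : Type*} [MeasurableSpace X] (D_S D_T : Measure X)
    [IsProbabilityMeasure D_S] [IsProbabilityMeasure D_T]
    (f_S f_T : X → Bool) (mfS : Measurable f_S) (mfT : Measurable f_T)
    (H : Set (X → Bool)) (hmeas : ∀ g ∈ H, Measurable g)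
    (h₁ h₂ : X → Bool) (hh₁ : h₁ ∈ H) (hh₂ : h₂ ∈ H) :
    errL D_T f_T h₁ ≤ errL D_T f_T h₂ + errP D_S h₁ h₂
      + (1/2) * dHH H D_S D_T :=
  target_err_bound_general D_S D_T f_T H h₁ h₂ hh₁ hh₂
end

section
/- For any hypothesis h_1 ∈ H: ε_T(h_1) ≤ γ_1 + (1/2)γ_2 + ε_S(h_1) + (1/2) d_{H∆H}(D_α, D_T) + (1/4) d_{H∆H}(D_S, D_B), where γ_1 = min_{h∈H} {ε_T(h) + (1/2)ε_S(h) + (1/2)ε_B(h)}, γ_2 = min_{h∈H} {ε_B(h) + ε_S(h)}, and D_α = (1/2)D_S + (1/2)D_B. -/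
open MeasureTheory

/-!
Let `h₂` and `h₃` attain `γ₁` and `γ₂`. By the triangle inequality for disagreement,
`ε_T(h₁) ≤ ε_T(h₁, h₂) + ε_T(h₂)`; moving `ε_T(h₁, h₂)` to the mixture `D_α` costs
`½ d(D_α, D_T)`, and `ε_α(h₁, h₂)` splits into its `D_S` and `D_B` halves. The `D_S` half is
bounded through `f_S`; the `D_B` half goes through `h₃` and `f_B`, and its remaining term
`ε_B(h₁, h₃)` is moved to `D_S` at cost `½ d(D_S, D_B)` and bounded through `f_S`.
Collecting terms gives exactly `γ₁ + ½ γ₂ + ε_S(h₁)`.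
-/

open scoped ENNReal

section Disagreement

variable {X : Type*} [MeasurableSpace X]

lemma errL_eq_errP (D : Measure X) (f h : X → Bool) : errL D f h = errP D h f := rfl

lemma errP_nonneg (D : Measure X) (h h' : X → Bool) : 0 ≤ errP D h h' :=
  ENNReal.toReal_nonneg

lemma errP_le_measureReal_univ (D : Measure X) [IsFiniteMeasure D] (h h' : X → Bool) :
    errP D h h' ≤ D.real Set.univ :=
  measureReal_mono (Set.subset_univ _)

lemma errP_comm (D : Measure X) (h h' : X → Bool) : errP D h h' = errP D h' h := by
  simp only [errP, ne_comm]

lemma errP_triangle (D : Measure X) [IsFiniteMeasure D] (a b c : X → Bool) :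
    errP D a c ≤ errP D a b + errP D b c := by
  have hsub : {x | a x ≠ c x} ⊆ {x | a x ≠ b x} ∪ {x | b x ≠ c x} := fun x hac =>
    (em (a x = b x)).elim (fun hab => Or.inr fun hbc => hac (hab.trans hbc)) Or.inl
  exact (measureReal_mono hsub).trans (measureReal_union_le _ _)

lemma errP_le_errL_add_errL (D : Measure X) [IsFiniteMeasure D] (f h h' : X → Bool) :
    errP D h h' ≤ errL D f h + errL D f h' := by
  rw [errL_eq_errP, errL_eq_errP, errP_comm D h' f]
  exact errP_triangle D h f h'

lemma errP_add (μ ν : Measure X) [IsFiniteMeasure μ] [IsFiniteMeasure ν] (h h' : X → Bool) :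
    errP (μ + ν) h h' = errP μ h h' + errP ν h h' :=
  measureReal_add_apply

lemma errP_smul (c : ℝ≥0∞) (μ : Measure X) (h h' : X → Bool) :
    errP (c • μ) h h' = c.toReal * errP μ h h' := by
  simp only [errP, Measure.smul_apply, smul_eq_mul, ENNReal.toReal_mul]

lemma errP_le_errP_add_half_dHH (H : Set (X → Bool)) (D₁ D₂ : Measure X)
    [IsFiniteMeasure D₁] [IsFiniteMeasure D₂] {g g' : X → Bool} (hg : g ∈ H) (hg' : g' ∈ H) :
    errP D₂ g g' ≤ errP D₁ g g' + (1/2) * dHH H D₁ D₂ := by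
  have hbdd : BddAbove ((fun p : (X → Bool) × (X → Bool) =>
      |errP D₁ p.1 p.2 - errP D₂ p.1 p.2|) '' (H ×ˢ H)) := by
    refine ⟨D₁.real Set.univ + D₂.real Set.univ, ?_⟩
    rintro _ ⟨p, -, rfl⟩
    have := errP_le_measureReal_univ D₁ p.1 p.2
    have := errP_le_measureReal_univ D₂ p.1 p.2
    have := errP_nonneg D₁ p.1 p.2
    have := errP_nonneg D₂ p.1 p.2
    rw [abs_sub_le_iff]
    constructor <;> linarith
  have := le_csSup hbdd ⟨(g, g'), Set.mk_mem_prod hg hg', rfl⟩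
  rw [dHH]
  linarith [neg_abs_le (errP D₁ g g' - errP D₂ g g')]

end Disagreement

theorem target_err_gamma_bound_general {X : Type*} [MeasurableSpace X]
    (D_S D_B D_T : Measure X)
    [IsProbabilityMeasure D_S] [IsProbabilityMeasure D_B] [IsProbabilityMeasure D_T]
    (f_S f_B f_T : X → Bool)
    (H : Set (X → Bool))
    (γ₁ γ₂ : ℝ)
    (hγ₁ : IsLeast ((fun h => errL D_T f_T h + (1/2) * errL D_S f_S h
        + (1/2) * errL D_B f_B h) '' H) γ₁)
    (hγ₂ : IsLeast ((fun h => errL D_B f_B h + errL D_S f_S h) '' H) γ₂)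
    (h₁ : X → Bool) (hh₁ : h₁ ∈ H) :
    errL D_T f_T h₁ ≤ γ₁ + (1/2) * γ₂ + errL D_S f_S h₁
      + (1/2) * dHH H ((1/2 : ENNReal) • D_S + (1/2 : ENNReal) • D_B) D_T
      + (1/4) * dHH H D_S D_B := by
  obtain ⟨h₂, hh₂, rfl⟩ := hγ₁.1
  obtain ⟨h₃, hh₃, rfl⟩ := hγ₂.1
  have := D_S.smul_finite (c := 1/2) (by norm_num)
  have := D_B.smul_finite (c := 1/2) (by norm_num)
  have hT : errL D_T f_T h₁ ≤ errP D_T h₁ h₂ + errL D_T f_T h₂ :=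
    errP_triangle D_T h₁ h₂ f_T
  have hαT := errP_le_errP_add_half_dHH H ((1/2 : ℝ≥0∞) • D_S + (1/2 : ℝ≥0∞) • D_B) D_T hh₁ hh₂
  have hα : errP ((1/2 : ℝ≥0∞) • D_S + (1/2 : ℝ≥0∞) • D_B) h₁ h₂
      = (1/2) * errP D_S h₁ h₂ + (1/2) * errP D_B h₁ h₂ := by
    rw [errP_add, errP_smul, errP_smul]
    norm_num
  have hS₁₂ := errP_le_errL_add_errL D_S f_S h₁ h₂
  have hS₁₃ := errP_le_errL_add_errL D_S f_S h₁ h₃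
  have hB₃₂ := errP_le_errL_add_errL D_B f_B h₃ h₂
  have hB := errP_triangle D_B h₁ h₃ h₂
  have hSB := errP_le_errP_add_half_dHH H D_S D_B hh₁ hh₃
  linarith

theorem target_err_gamma_bound {X : Type*} [MeasurableSpace X]
    (D_S D_B D_T : Measure X)
    [IsProbabilityMeasure D_S] [IsProbabilityMeasure D_B] [IsProbabilityMeasure D_T]
    (f_S f_B f_T : X → Bool)
    (mfS : Measurable f_S) (mfB : Measurable f_B) (mfT : Measurable f_T)
    (H : Set (X → Bool)) (hmeas : ∀ g ∈ H, Measurable g)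
    (γ₁ γ₂ : ℝ)
    (hγ₁ : IsLeast ((fun h => errL D_T f_T h + (1/2) * errL D_S f_S h
        + (1/2) * errL D_B f_B h) '' H) γ₁)
    (hγ₂ : IsLeast ((fun h => errL D_B f_B h + errL D_S f_S h) '' H) γ₂)
    (h₁ : X → Bool) (hh₁ : h₁ ∈ H) :
    errL D_T f_T h₁ ≤ γ₁ + (1/2) * γ₂ + errL D_S f_S h₁
      + (1/2) * dHH H ((1/2 : ENNReal) • D_S + (1/2 : ENNReal) • D_B) D_T
      + (1/4) * dHH H D_S D_B :=
  target_err_gamma_bound_general D_S D_B D_T f_S f_B f_T H γ₁ γ₂ hγ₁ hγ₂ h₁ hh₁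
end
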